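/- For h ∈ ℝ define M_h^* f(x) = sup_{t>0} ∫_{I(h,2)} |f(x−ty)| dy, where I(h,2) = {y ∈ ℝ : |y−h| < 2}. Let f = χ_{(0,1)}, the indicator of the unit interval. Then for every 1 < p < ∞ there is a constant c > 0, independent of h, such that for all h ≥ 2: ‖M_h^* f‖_{L^p(ℝ)} ≥ c · h^{1/p}. In particular the growth (1+|h|)^{1/p} in the L^p bound for M_h^* is sharp up to a constant multiple. -/
import Mathlib


open MeasureTheory Metric Set
open scoped ENNReal NNReal

noncomputable section

/-- `L^r` quasi-norm (in `ℝ≥0∞`) of an `ℝ≥0∞`-valued function. -/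
def lpNormE {α : Type*} [MeasurableSpace α] (μ : Measure α) (F : α → ℝ≥0∞) (r : ℝ≥0∞) : ℝ≥0∞ :=
  if r = 0 then 0 else if r = ∞ then essSup F μ
  else (∫⁻ x, F x ^ r.toReal ∂μ) ^ (1 / r.toReal)

/-- The maximal operator `M_h^* f(x) = sup_{t>0} ∫_{I(h,2)} |f(x - ty)| dy`,
where `I(h,2) = {y : |y - h| < 2}`. -/
def MhStar (h : ℝ) (f : ℝ → ℝ) (x : ℝ) : ℝ≥0∞ :=
  ⨆ t ∈ Ioi (0 : ℝ), ∫⁻ y in ball h 2, ENNReal.ofReal |f (x - t * y)|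

lemma pointwise_bound (h : ℝ) (hh : 2 ≤ h) (x : ℝ) (hx : x ∈ Ioo (0:ℝ) h) :
    (1 : ℝ≥0∞) ≤ MhStar h (Set.indicator (Ioo (0 : ℝ) 1) fun _ => (1 : ℝ)) x := by
  obtain ⟨hx0, hxh⟩ := hx
  have hh0 : (0:ℝ) < h := lt_of_le_of_lt (le_of_lt hx0) hxh
  set t := x / h with htdef
  have ht0 : 0 < t := div_pos hx0 hh0
  have hle : (∫⁻ y in ball h 2,
      ENNReal.ofReal |Set.indicator (Ioo (0:ℝ) 1) (fun _ => (1:ℝ)) (x - t * y)|) ≤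
      MhStar h (Set.indicator (Ioo (0 : ℝ) 1) fun _ => (1 : ℝ)) x :=
    le_iSup₂ (f := fun (t : ℝ) (_ : t ∈ Ioi (0:ℝ)) =>
      ∫⁻ y in ball h 2,
        ENNReal.ofReal |Set.indicator (Ioo (0:ℝ) 1) (fun _ => (1:ℝ)) (x - t * y)|) t
      (mem_Ioi.mpr ht0)
  refine le_trans ?_ hle
  have hfun : ∀ y : ℝ,
      ENNReal.ofReal |Set.indicator (Ioo (0:ℝ) 1) (fun _ => (1:ℝ)) (x - t * y)| =
      (Ioo ((x - 1) / t) h).indicator (fun _ => (1 : ℝ≥0∞)) y := by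
    intro y
    have hmem : x - t * y ∈ Ioo (0:ℝ) 1 ↔ y ∈ Ioo ((x - 1) / t) h := by
      simp only [mem_Ioo]
      have hth : t * h = x := by rw [htdef]; field_simp
      rw [div_lt_iff₀ ht0]
      constructor <;> rintro ⟨h1, h2⟩ <;> constructor <;> nlinarith
    by_cases hy : y ∈ Ioo ((x - 1) / t) h
    · rw [Set.indicator_of_mem hy, Set.indicator_of_mem (hmem.mpr hy)]
      norm_num
    · rw [Set.indicator_of_notMem hy,
        Set.indicator_of_notMem (fun hc => hy (hmem.mp hc))]
      norm_num
  calc (1 : ℝ≥0∞) = volume (Ioo (h - 1) h) := by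
        rw [Real.volume_Ioo]; norm_num
    _ ≤ volume (Ioo ((x - 1) / t) h ∩ ball h 2) := by
        apply measure_mono
        intro y hy
        rw [mem_Ioo] at hy
        constructor
        · refine ⟨lt_of_le_of_lt ?_ hy.1, hy.2⟩
          rw [div_le_iff₀ ht0]
          have hth : t * h = x := by rw [htdef]; field_simp
          have htle : t ≤ 1 := by
            rw [htdef, div_le_one hh0]; exact hxh.le
          nlinarith
        · rw [Real.ball_eq_Ioo, mem_Ioo]
          constructor <;> linarith
    _ = ∫⁻ y in ball h 2, (Ioo ((x - 1) / t) h).indicator (fun _ => (1 : ℝ≥0∞)) y := by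
        rw [lintegral_indicator measurableSet_Ioo, setLIntegral_one,
          Measure.restrict_apply measurableSet_Ioo]
    _ = _ := by
        refine lintegral_congr fun y => (hfun y).symm

/-- Sharpness of Lemma 3.2: for `f = χ_{(0,1)}` and `1 < p < ∞`, one has
`‖M_h^* f‖_{L^p} ≥ c h^{1/p}` for all `h ≥ 2`, with `c > 0` independent of `h`. -/
theorem MhStar_Lp_bound_sharp (p : ℝ) (hp : 1 < p) :
    ∃ c : ℝ, 0 < c ∧ ∀ h : ℝ, 2 ≤ h →
      ENNReal.ofReal (c * h ^ (1 / p)) ≤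
        lpNormE volume (MhStar h (Set.indicator (Ioo (0 : ℝ) 1) fun _ => (1 : ℝ)))
          (ENNReal.ofReal p) := by
  refine ⟨1, one_pos, fun h hh => ?_⟩
  have hp0 : (0:ℝ) < p := lt_trans one_pos hp
  have hh0 : (0:ℝ) < h := lt_of_lt_of_le two_pos hh
  have hr0 : ENNReal.ofReal p ≠ 0 := by
    simp [ENNReal.ofReal_eq_zero, not_le, hp0]
  have hrt : (ENNReal.ofReal p).toReal = p := ENNReal.toReal_ofReal hp0.le
  rw [lpNormE, if_neg hr0, if_neg ENNReal.ofReal_ne_top, hrt]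
  have key : ENNReal.ofReal h ≤
      ∫⁻ x, (MhStar h (Set.indicator (Ioo (0 : ℝ) 1) fun _ => (1 : ℝ))) x ^ p := by
    calc ENNReal.ofReal h = volume (Ioo (0:ℝ) h) := by rw [Real.volume_Ioo]; norm_num
      _ = ∫⁻ x in Ioo (0:ℝ) h, 1 := (setLIntegral_one _).symm
      _ ≤ ∫⁻ x in Ioo (0:ℝ) h,
            (MhStar h (Set.indicator (Ioo (0 : ℝ) 1) fun _ => (1 : ℝ))) x ^ p := by
          refine lintegral_mono_ae ?_
          refine (ae_restrict_iff' measurableSet_Ioo).2 (ae_of_all _ fun x hx => ?_)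
          calc (1:ℝ≥0∞) = 1 ^ p := (ENNReal.one_rpow p).symm
            _ ≤ _ := ENNReal.rpow_le_rpow (pointwise_bound h hh x hx) hp0.le
      _ ≤ _ := setLIntegral_le_lintegral _ _
  calc ENNReal.ofReal (1 * h ^ (1 / p)) = ENNReal.ofReal h ^ (1 / p) := by
        rw [one_mul, ← ENNReal.ofReal_rpow_of_pos hh0]
    _ ≤ _ := ENNReal.rpow_le_rpow key (by positivity)
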